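/- With μ = 1/√2 and generic cycle mean m(z) = E[J_z + D_z] where θ(z) = 1/√2 + O(1/z): m(z) = 1/√2 + 1/(12z) + O(z⁻²) as z → ∞, and this expansion does not depend on the O(1/z) term in θ(z). Concretely, if θ(z) = 1/√2 + γ/z + O(z⁻²), E[J_z] = θ(z)/2 - θ(z)²/(12z) + O(z⁻²) and E[D_z] = 1/(4θ(z)) + 1/(8z) + O(z⁻²), then E[J_z] + E[D_z] = 1/√2 + 1/(12z) + O(z⁻²), with the coefficient of 1/z independent of γ. -/

import Mathlib

open Filter Asymptotics Topology

/-
Write `μ = 1/√2` and `e = θ - μ`. Since `μ² = 1/2`, the error term factors exactly as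
`e² / (2θ) - e (θ + μ) / (12 z)`, and `e = O(z⁻¹)`. Then `θ → μ ≠ 0` keeps `1 / θ` and `θ + μ`
bounded, so both summands are `O(z⁻²)` whatever the coefficient of `1/z` in `θ`.
-/

lemma inv_sq_isBigO_inv_atTop : (fun z : ℝ => (z ^ 2)⁻¹) =O[atTop] fun z => z⁻¹ := by
  have h := (isBigO_refl (fun z : ℝ => z⁻¹) atTop).mul (tendsto_inv_atTop_zero.isBigO_one ℝ)
  simpa only [mul_one, ← mul_inv, ← sq, inv_pow] using h

lemma isBigO_sub_const_inv_of_isBigO_inv_sq {f : ℝ → ℝ} {c γ : ℝ}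
    (h : (fun z => f z - (c + γ / z)) =O[atTop] fun z => (z ^ 2)⁻¹) :
    (fun z => f z - c) =O[atTop] fun z => z⁻¹ := by
  have hγ : (fun z : ℝ => γ / z) =O[atTop] fun z => z⁻¹ := by
    simpa only [div_eq_mul_inv] using (isBigO_refl (fun z : ℝ => z⁻¹) atTop).const_mul_left γ
  simpa only [sub_add_cancel_right, sub_add_eq_sub_sub, sub_add_cancel] using
    (h.trans inv_sq_isBigO_inv_atTop).add hγ

lemma cycleMean_sub_eq {c θ z : ℝ} (hc : c ^ 2 = 1 / 2) (hθ : θ ≠ 0) (hz : z ≠ 0) :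
    (θ / 2 - θ ^ 2 / (12 * z)) + (1 / (4 * θ) + 1 / (8 * z)) - (c + 1 / (12 * z)) =
      (θ - c) ^ 2 / (2 * θ) - (θ - c) * (θ + c) / (12 * z) := by
  field_simp
  linear_combination (-64 * θ - 384 * z) * hc

lemma inv_sqrt_two_sq : (1 / Real.sqrt 2) ^ 2 = 1 / 2 := by
  rw [div_pow, one_pow, Real.sq_sqrt zero_le_two]

/-- If `θ(z) = 1/√2 + γ/z + O(z⁻²)`, then with `E[J_z] = θ/2 - θ²/(12z)` and
`E[D_z] = 1/(4θ) + 1/(8z)` (up to `O(z⁻²)`), the cycle mean is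
`1/√2 + 1/(12z) + O(z⁻²)`, independently of `γ`. -/
theorem stmt16 (γ : ℝ) (θ : ℝ → ℝ)
    (hθ : (fun z => θ z - (1 / Real.sqrt 2 + γ / z)) =O[atTop] fun z => (z ^ 2)⁻¹) :
    (fun z => (θ z / 2 - (θ z) ^ 2 / (12 * z)) + (1 / (4 * θ z) + 1 / (8 * z))
        - (1 / Real.sqrt 2 + 1 / (12 * z))) =O[atTop] fun z => (z ^ 2)⁻¹ := by
  set μ : ℝ := 1 / Real.sqrt 2
  have hμ : μ ≠ 0 := by positivity
  have he : (fun z => θ z - μ) =O[atTop] fun z => z⁻¹ :=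
    isBigO_sub_const_inv_of_isBigO_inv_sq hθ
  have hlim : Tendsto θ atTop (𝓝 μ) := by
    simpa using (he.trans_tendsto tendsto_inv_atTop_zero).add_const μ
  have hinv : (fun z => (2 * θ z)⁻¹) =O[atTop] fun _ => (1 : ℝ) :=
    ((hlim.const_mul 2).inv₀ (by positivity)).isBigO_one ℝ
  have hsum : (fun z => θ z + μ) =O[atTop] fun _ => (1 : ℝ) := (hlim.add_const μ).isBigO_one ℝ
  have hinv12 : (fun z : ℝ => (12 * z)⁻¹) =O[atTop] fun z => z⁻¹ := by
    simpa only [mul_inv] using (isBigO_refl (fun z : ℝ => z⁻¹) atTop).const_mul_left (12 : ℝ)⁻¹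
  have hsq : (fun z => (θ z - μ) ^ 2 / (2 * θ z)) =O[atTop] fun z => (z ^ 2)⁻¹ := by
    simpa only [div_eq_mul_inv, ← sq, mul_one, inv_pow] using (he.mul he).mul hinv
  have hprod : (fun z => (θ z - μ) * (θ z + μ) / (12 * z)) =O[atTop] fun z => (z ^ 2)⁻¹ := by
    simpa only [div_eq_mul_inv, mul_one, ← sq, inv_pow] using (he.mul hsum).mul hinv12
  refine (hsq.sub hprod).congr' ?_ EventuallyEq.rfl
  filter_upwards [hlim.eventually_ne hμ, eventually_ne_atTop 0] with z hθz hz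
  exact (cycleMean_sub_eq inv_sqrt_two_sq hθz hz).symm
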